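/- arXiv:0911.2277 — 5 statements merged into one kernel-verified Lean document; each statement's English description precedes it below -/
import Mathlib

section
/- Let φ be a smooth function on [0,∞) with φ(0) = φ'(0) = 0, φ''(t) ≥ 0 and φ'''(t) ≥ 0 for all t ≥ 0. Then for all 0 ≤ p ≤ q, φ(q) − φ(p) − φ'(p)(q − p) ≥ φ(q − p). -/
/-!
Put `g x = φ (p + x) - φ p - φ' p * x - φ x`, so `g 0 = 0` and `g' x = φ' (p + x) - φ' p - φ' x`.
Since `φ'''` is nonnegative, `φ''` is monotone; together with `φ' 0 = 0` this makes `φ'`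
superadditive on `[0, ∞)`, i.e. `g' ≥ 0`, hence `g (q - p) ≥ 0`.
-/

open Set

section

variable {f f' : ℝ → ℝ}

lemma monotoneOn_Ici_of_hasDerivWithinAt_nonneg {a : ℝ}
    (hf : ∀ x ∈ Ici a, HasDerivWithinAt f (f' x) (Ici a) x) (hf' : ∀ x ∈ Ioi a, 0 ≤ f' x) :
    MonotoneOn f (Ici a) :=
  monotoneOn_of_hasDerivWithinAt_nonneg (convex_Ici a)
    (fun x hx ↦ (hf x hx).continuousWithinAt)
    (by
      rw [interior_Ici]
      exact fun x hx ↦ (hf x (Ioi_subset_Ici_self hx)).mono Ioi_subset_Ici_self)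
    (by rw [interior_Ici]; exact hf')

lemma hasDerivWithinAt_Ici_comp_const_add
    (hf : ∀ x ∈ Ici (0 : ℝ), HasDerivWithinAt f (f' x) (Ici 0) x) {p : ℝ} (hp : 0 ≤ p) :
    ∀ x ∈ Ici (0 : ℝ), HasDerivWithinAt (fun y ↦ f (p + y)) (f' (p + x)) (Ici 0) x := by
  intro x hx
  have hmaps : MapsTo (fun y ↦ p + y) (Ici (0 : ℝ)) (Ici 0) := fun y hy ↦ add_nonneg hp hy
  have := (hf (p + x) (hmaps hx)).comp x ((hasDerivWithinAt_id x _).const_add p) hmaps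
  rwa [mul_one] at this

lemma add_le_of_monotoneOn_hasDerivWithinAt
    (hf : ∀ x ∈ Ici (0 : ℝ), HasDerivWithinAt f (f' x) (Ici 0) x) (hf' : MonotoneOn f' (Ici 0))
    (h0 : f 0 = 0) {p x : ℝ} (hp : 0 ≤ p) (hx : 0 ≤ x) : f p + f x ≤ f (p + x) := by
  have hderiv : ∀ y ∈ Ici (0 : ℝ), HasDerivWithinAt (fun y ↦ f (p + y) - f y - f p)
      (f' (p + y) - f' y) (Ici 0) y := fun y hy ↦
    ((hasDerivWithinAt_Ici_comp_const_add hf hp y hy).sub (hf y hy)).sub_const (f p)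
  have hmono := monotoneOn_Ici_of_hasDerivWithinAt_nonneg hderiv fun y hy ↦
    sub_nonneg.2 <| hf' (Ioi_subset_Ici_self hy) (add_nonneg hp (le_of_lt hy))
      (le_add_of_nonneg_left hp)
  have := hmono self_mem_Ici hx hx
  simp only [add_zero, h0, sub_zero, sub_self] at this
  linarith

lemma le_sub_sub_mul_of_superadditive_deriv
    (hf : ∀ x ∈ Ici (0 : ℝ), HasDerivWithinAt f (f' x) (Ici 0) x)
    (hf' : ∀ p x : ℝ, 0 ≤ p → 0 ≤ x → f' p + f' x ≤ f' (p + x))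
    (h0 : f 0 = 0) {p x : ℝ} (hp : 0 ≤ p) (hx : 0 ≤ x) : f x ≤ f (p + x) - f p - f' p * x := by
  have hderiv : ∀ y ∈ Ici (0 : ℝ), HasDerivWithinAt (fun y ↦ f (p + y) - f p - f' p * y - f y)
      (f' (p + y) - f' p - f' y) (Ici 0) y := fun y hy ↦ by
    have := (((hasDerivWithinAt_Ici_comp_const_add hf hp y hy).sub_const (f p)).sub
      ((hasDerivWithinAt_id y _).const_mul (f' p))).sub (hf y hy)
    rwa [mul_one] at this
  have hmono := monotoneOn_Ici_of_hasDerivWithinAt_nonneg hderiv fun y hy ↦ by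
    linarith [hf' p y hp (le_of_lt hy)]
  have := hmono self_mem_Ici hx hx
  simp only [add_zero, h0, mul_zero, sub_self] at this
  linarith

end

lemma ContDiffOn.hasDerivWithinAt_derivWithin_Ici {f : ℝ → ℝ} {n : WithTop ℕ∞} {a : ℝ}
    (hf : ContDiffOn ℝ n f (Ici a)) (hn : n ≠ 0) :
    ∀ x ∈ Ici a, HasDerivWithinAt f (derivWithin f (Ici a) x) (Ici a) x :=
  fun x hx ↦ (hf.differentiableOn hn x hx).hasDerivWithinAt

theorem stmt_2_general (φ : ℝ → ℝ)
    (hφ : ContDiffOn ℝ 3 φ (Set.Ici 0))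
    (h0 : φ 0 = 0) (h0' : derivWithin φ (Set.Ici 0) 0 = 0)
    (hφ''' : ∀ t : ℝ, 0 ≤ t →
      0 ≤ derivWithin (derivWithin (derivWithin φ (Set.Ici 0)) (Set.Ici 0))
            (Set.Ici 0) t)
    (p q : ℝ) (hp : 0 ≤ p) (hpq : p ≤ q) :
    φ q - φ p - derivWithin φ (Set.Ici 0) p * (q - p) ≥ φ (q - p) := by
  set φ' := derivWithin φ (Ici (0 : ℝ))
  set φ'' := derivWithin φ' (Ici (0 : ℝ))
  have hs : UniqueDiffOn ℝ (Ici (0 : ℝ)) := uniqueDiffOn_Ici 0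
  have hφ'_smooth : ContDiffOn ℝ 2 φ' (Ici 0) := hφ.derivWithin hs (by norm_num)
  have hφ''_smooth : ContDiffOn ℝ 1 φ'' (Ici 0) := hφ'_smooth.derivWithin hs (by norm_num)
  have hφ''_mono : MonotoneOn φ'' (Ici 0) :=
    monotoneOn_Ici_of_hasDerivWithinAt_nonneg
      (hφ''_smooth.hasDerivWithinAt_derivWithin_Ici one_ne_zero) fun t ht ↦ hφ''' t (le_of_lt ht)
  have hφ'_superadd : ∀ p x : ℝ, 0 ≤ p → 0 ≤ x → φ' p + φ' x ≤ φ' (p + x) :=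
    fun _ _ ↦ add_le_of_monotoneOn_hasDerivWithinAt
      (hφ'_smooth.hasDerivWithinAt_derivWithin_Ici (by norm_num)) hφ''_mono h0'
  have := le_sub_sub_mul_of_superadditive_deriv
    (hφ.hasDerivWithinAt_derivWithin_Ici (by norm_num)) hφ'_superadd h0 hp (sub_nonneg.2 hpq)
  rwa [add_sub_cancel] at this

theorem stmt_2 (φ : ℝ → ℝ)
    (hφ : ContDiffOn ℝ 3 φ (Set.Ici 0))
    (h0 : φ 0 = 0) (h0' : derivWithin φ (Set.Ici 0) 0 = 0)
    (hφ'' : ∀ t : ℝ, 0 ≤ t →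
      0 ≤ derivWithin (derivWithin φ (Set.Ici 0)) (Set.Ici 0) t)
    (hφ''' : ∀ t : ℝ, 0 ≤ t →
      0 ≤ derivWithin (derivWithin (derivWithin φ (Set.Ici 0)) (Set.Ici 0))
            (Set.Ici 0) t)
    (p q : ℝ) (hp : 0 ≤ p) (hpq : p ≤ q) :
    φ q - φ p - derivWithin φ (Set.Ici 0) p * (q - p) ≥ φ (q - p) :=
  stmt_2_general φ hφ h0 h0' hφ''' p q hp hpq
end

section
/- Let φ be a smooth function on [0,∞) with φ(0) = φ'(0) = 0, φ''(t) ≥ 0 and φ'''(t) ≥ 0 for all t ≥ 0. Then for all 0 ≤ q < p, φ(q) − φ(p) − φ'(p)(q − p) ≥ φ''((p+q)/2) · ((p−q)/2)². -/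
/-!
With `m = (p + q) / 2` and `h = (p - q) / 2`, the remainder `R t = φ q - φ t - φ' t * (q - t)`
vanishes at `t = q` and has derivative `φ'' t * (t - q)`. This is nonnegative on `[q, m]`, and on
`[m, p]` it is at least `φ'' m * h` because `φ''` is monotone (`φ''' ≥ 0`) and `t - q ≥ h`.
Integrating over `[m, p]`, an interval of length `h`, gives `R p ≥ φ'' m * h ^ 2`.
-/

open Set

theorem mul_sub_le_image_sub_of_le_hasDerivAt {f f' : ℝ → ℝ} {a b C : ℝ} (hab : a ≤ b)
    (hf : ContinuousOn f (Icc a b)) (hff' : ∀ t ∈ Ioo a b, HasDerivAt f (f' t) t)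
    (hC : ∀ t ∈ Ioo a b, C ≤ f' t) : C * (b - a) ≤ f b - f a := by
  rw [← interior_Icc] at hff' hC
  refine (convex_Icc a b).mul_sub_le_image_sub_of_le_deriv hf
    (fun t ht ↦ (hff' t ht).differentiableAt.differentiableWithinAt) (fun t ht ↦ ?_)
    a (left_mem_Icc.2 hab) b (right_mem_Icc.2 hab) hab
  rw [(hff' t ht).deriv]
  exact hC t ht

theorem hasDerivAt_taylor_remainder {f f' f'' : ℝ → ℝ} {q t : ℝ}
    (hf : HasDerivAt f (f' t) t) (hf' : HasDerivAt f' (f'' t) t) :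
    HasDerivAt (fun s ↦ f q - f s - f' s * (q - s)) (f'' t * (t - q)) t := by
  refine ((hf.const_sub (f q)).sub (hf'.mul ((hasDerivAt_id' t).const_sub q))).congr_deriv ?_
  ring

theorem mul_sq_le_taylor_remainder {f f' f'' : ℝ → ℝ} {p q : ℝ} (hqp : q ≤ p)
    (hf : ContinuousOn f (Icc q p)) (hf' : ContinuousOn f' (Icc q p))
    (hff' : ∀ t ∈ Ioo q p, HasDerivAt f (f' t) t)
    (hf'f'' : ∀ t ∈ Ioo q p, HasDerivAt f' (f'' t) t)
    (hf''_nonneg : ∀ t ∈ Ioo q p, 0 ≤ f'' t)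
    (hf''_mono : MonotoneOn f'' (Icc ((p + q) / 2) p)) :
    f'' ((p + q) / 2) * ((p - q) / 2) ^ 2 ≤ f q - f p - f' p * (q - p) := by
  set m := (p + q) / 2 with hm_def
  set h := (p - q) / 2 with hh_def
  have hqm : q ≤ m := by linarith [hm_def]
  have hmp : m ≤ p := by linarith [hm_def]
  set R : ℝ → ℝ := fun s ↦ f q - f s - f' s * (q - s)
  have hR : ∀ t ∈ Ioo q p, HasDerivAt R (f'' t * (t - q)) t := fun t ht ↦
    hasDerivAt_taylor_remainder (hff' t ht) (hf'f'' t ht)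
  have hRc : ContinuousOn R (Icc q p) := by fun_prop
  have hR_left : 0 * (m - q) ≤ R m - R q :=
    mul_sub_le_image_sub_of_le_hasDerivAt hqm (hRc.mono (Icc_subset_Icc_right hmp))
      (fun t ht ↦ hR t ⟨ht.1, ht.2.trans_le hmp⟩)
      (fun t ht ↦ mul_nonneg (hf''_nonneg t ⟨ht.1, ht.2.trans_le hmp⟩) (by linarith [ht.1]))
  have hR_right : f'' m * h * (p - m) ≤ R p - R m := by
    refine mul_sub_le_image_sub_of_le_hasDerivAt hmp (hRc.mono (Icc_subset_Icc_left hqm))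
      (fun t ht ↦ hR t ⟨hqm.trans_lt ht.1, ht.2⟩) (fun t ht ↦ ?_)
    have hf''_le : f'' m ≤ f'' t :=
      hf''_mono (left_mem_Icc.2 hmp) (Ioo_subset_Icc_self ht) ht.1.le
    exact mul_le_mul hf''_le (by linarith [ht.1]) (by linarith)
      (hf''_nonneg t ⟨hqm.trans_lt ht.1, ht.2⟩)
  have hRq : R q = 0 := by simp [R]
  have hpm : p - m = h := by ring
  simp only [hRq, hpm, zero_mul] at hR_left hR_right
  linarith

theorem stmt_3_general (φ : ℝ → ℝ)
    (hφ : ContDiffOn ℝ 3 φ (Set.Ici 0))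
    (hφ'' : ∀ t : ℝ, 0 ≤ t →
      0 ≤ derivWithin (derivWithin φ (Set.Ici 0)) (Set.Ici 0) t)
    (hφ''' : ∀ t : ℝ, 0 ≤ t →
      0 ≤ derivWithin (derivWithin (derivWithin φ (Set.Ici 0)) (Set.Ici 0))
            (Set.Ici 0) t)
    (p q : ℝ) (hq : 0 ≤ q) (hqp : q < p) :
    φ q - φ p - derivWithin φ (Set.Ici 0) p * (q - p) ≥
      derivWithin (derivWithin φ (Set.Ici 0)) (Set.Ici 0) ((p + q) / 2) *
        ((p - q) / 2) ^ 2 := by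
  have hD1 : ContDiffOn ℝ 2 (derivWithin φ (Ici 0)) (Ici 0) :=
    hφ.derivWithin (uniqueDiffOn_Ici 0) (by norm_num)
  have hD2 : ContDiffOn ℝ 1 (derivWithin (derivWithin φ (Ici 0)) (Ici 0)) (Ici 0) :=
    hD1.derivWithin (uniqueDiffOn_Ici 0) (by norm_num)
  have hasDerivAt_of_pos {g : ℝ → ℝ} (hg : DifferentiableOn ℝ g (Ici 0)) {t : ℝ} (ht : 0 < t) :
      HasDerivAt g (derivWithin g (Ici 0) t) t :=
    (hg t ht.le).hasDerivWithinAt.hasDerivAt (Ici_mem_nhds ht)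
  have hmono : MonotoneOn (derivWithin (derivWithin φ (Ici 0)) (Ici 0)) (Ici 0) :=
    monotoneOn_of_hasDerivWithinAt_nonneg (convex_Ici 0) hD2.continuousOn
      (fun t ht ↦ (hasDerivAt_of_pos (hD2.differentiableOn one_ne_zero)
        (by rwa [interior_Ici] at ht)).hasDerivWithinAt)
      (fun t ht ↦ hφ''' t (interior_subset ht))
  have hIcc : Icc q p ⊆ Ici 0 := fun t ht ↦ hq.trans ht.1
  have hIoo {t : ℝ} (ht : t ∈ Ioo q p) : 0 < t := hq.trans_lt ht.1
  exact mul_sq_le_taylor_remainder hqp.le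
    (hφ.continuousOn.mono hIcc) (hD1.continuousOn.mono hIcc)
    (fun t ht ↦ hasDerivAt_of_pos (hφ.differentiableOn (by norm_num)) (hIoo ht))
    (fun t ht ↦ hasDerivAt_of_pos (hD1.differentiableOn (by norm_num)) (hIoo ht))
    (fun t ht ↦ hφ'' t (hIoo ht).le)
    (hmono.mono fun t ht ↦ show 0 ≤ t by linarith [ht.1])

theorem stmt_3 (φ : ℝ → ℝ)
    (hφ : ContDiffOn ℝ 3 φ (Set.Ici 0))
    (h0 : φ 0 = 0) (h0' : derivWithin φ (Set.Ici 0) 0 = 0)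
    (hφ'' : ∀ t : ℝ, 0 ≤ t →
      0 ≤ derivWithin (derivWithin φ (Set.Ici 0)) (Set.Ici 0) t)
    (hφ''' : ∀ t : ℝ, 0 ≤ t →
      0 ≤ derivWithin (derivWithin (derivWithin φ (Set.Ici 0)) (Set.Ici 0))
            (Set.Ici 0) t)
    (p q : ℝ) (hq : 0 ≤ q) (hqp : q < p) :
    φ q - φ p - derivWithin φ (Set.Ici 0) p * (q - p) ≥
      derivWithin (derivWithin φ (Set.Ici 0)) (Set.Ici 0) ((p + q) / 2) *
        ((p - q) / 2) ^ 2 :=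
  stmt_3_general φ hφ hφ'' hφ''' p q hq hqp
end

section
/- Fix 0 < α < 1. Then there exists ε > 0 with α + 2ε < 1 such that for all x = (x₁, x₂) ∈ ℝ² the integral over {(t₁,t₂) : t₁² + t₂² < 1} of 1 / ( |x₁² − t₁²|^{α/2} · |x₁ − t₁|^{ε} · |x₂ − t₂|^{1−ε} ) dt₁ dt₂ is finite, with a bound independent of x. -/
open MeasureTheory Set intervalIntegral

lemma L0 {r : ℝ} (hr : -1 < r) (a b : ℝ) :
    IntervalIntegrable (fun s : ℝ => |s| ^ r) volume a b := by
  have base : ∀ c : ℝ, 0 ≤ c → IntervalIntegrable (fun s : ℝ => |s| ^ r) volume 0 c := by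
    intro c hc
    have h := intervalIntegrable_rpow' (a := 0) (b := c) hr
    rw [intervalIntegrable_iff, uIoc_of_le hc] at h ⊢
    refine h.congr_fun ?_ measurableSet_Ioc
    intro x hx
    show x ^ r = |x| ^ r
    rw [abs_of_pos hx.1]
  have all0 : ∀ c : ℝ, IntervalIntegrable (fun s : ℝ => |s| ^ r) volume 0 c := by
    intro c
    rcases le_total 0 c with hc | hc
    · exact base c hc
    · have h := (IntervalIntegrable.iff_comp_neg).mp (base (-c) (by linarith))
      simpa [abs_neg] using h
  exact (all0 a).symm.trans (all0 b)

lemma L1 {β : ℝ} (hβ0 : 0 < β) (hβ1 : β < 1) :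
    (∫ s in (-1:ℝ)..1, |s| ^ (-β)) = 2 / (1 - β) := by
  have hr : (-1:ℝ) < -β := by linarith
  have h1 : (∫ s in (0:ℝ)..1, |s| ^ (-β)) = 1 / (1 - β) := by
    have : (∫ s in (0:ℝ)..1, |s| ^ (-β)) = ∫ s in (0:ℝ)..1, s ^ (-β) := by
      refine integral_congr ?_
      intro x hx
      rw [uIcc_of_le (by norm_num : (0:ℝ) ≤ 1)] at hx
      show |x| ^ (-β) = x ^ (-β)
      rw [abs_of_nonneg hx.1]
    rw [this, integral_rpow (Or.inl hr)]
    rw [Real.one_rpow, Real.zero_rpow (by linarith : -β + 1 ≠ 0)]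
    ring_nf
  have h2 : (∫ s in (-1:ℝ)..0, |s| ^ (-β)) = ∫ s in (0:ℝ)..1, |s| ^ (-β) := by
    have := integral_comp_neg (a := (0:ℝ)) (b := 1) (fun s : ℝ => |s| ^ (-β))
    simp only [abs_neg, neg_zero, neg_neg] at this
    exact this.symm
  have := integral_add_adjacent_intervals (a := (-1:ℝ)) (b := 0) (c := 1)
    (f := fun s : ℝ => |s| ^ (-β)) (L0 hr _ _) (L0 hr _ _)
  rw [← this, h1, h2, h1]
  ring

lemma L2 {β : ℝ} (hβ0 : 0 < β) (hβ1 : β < 1) (c : ℝ) :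
    IntegrableOn (fun t : ℝ => |c - t| ^ (-β)) (Ioc (-1:ℝ) 1) volume ∧
    (∫ t in Ioc (-1:ℝ) 1, |c - t| ^ (-β)) ≤ 2 + 2 / (1 - β) := by
  have hr : (-1:ℝ) < -β := by linarith
  have hii : IntervalIntegrable (fun t : ℝ => |c - t| ^ (-β)) volume (-1) 1 := by
    have h := (L0 hr (c + 1) (c - 1)).comp_sub_left c
    rw [show c - (c + 1) = -1 by ring, show c - (c - 1) = 1 by ring] at h
    exact h
  have hInd : Integrable ((Ioc (-1:ℝ) 1).indicator fun s : ℝ => |s| ^ (-β)) volume :=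
    (integrable_indicator_iff measurableSet_Ioc).mpr (L0 hr (-1) 1).1
  have hIndnn : ∀ s : ℝ, 0 ≤ (Ioc (-1:ℝ) 1).indicator (fun s : ℝ => |s| ^ (-β)) s :=
    fun s => Set.indicator_nonneg (fun y _ => Real.rpow_nonneg (abs_nonneg y) _) s
  have hpoint : ∀ s : ℝ, |s| ^ (-β) ≤ 1 + (Ioc (-1:ℝ) 1).indicator (fun s : ℝ => |s| ^ (-β)) s := by
    intro s
    rcases lt_or_ge |s| 1 with h | h
    · have hs : s ∈ Ioc (-1:ℝ) 1 := by
        rw [abs_lt] at h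
        exact ⟨h.1, h.2.le⟩
      rw [Set.indicator_of_mem hs]
      have := Real.rpow_nonneg (abs_nonneg s) (-β)
      linarith
    · have h1 : |s| ^ (-β) ≤ 1 :=
        Real.rpow_le_one_of_one_le_of_nonpos h (by linarith)
      have := hIndnn s
      linarith
  have hval : (∫ t in Ioc (-1:ℝ) 1, |c - t| ^ (-β)) = ∫ s in (c-1)..(c+1), |s| ^ (-β) := by
    rw [← intervalIntegral.integral_of_le (by norm_num : (-1:ℝ) ≤ 1)]
    have := integral_comp_sub_left (a := (-1:ℝ)) (b := 1) (fun s : ℝ => |s| ^ (-β)) c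
    rw [this, show c - 1 = c - 1 by ring, show c - (-1) = c + 1 by ring]
  have hbound : (∫ s in (c-1)..(c+1), |s| ^ (-β)) ≤ 2 + 2 / (1 - β) := by
    have hg : IntervalIntegrable
        (fun s : ℝ => 1 + (Ioc (-1:ℝ) 1).indicator (fun s : ℝ => |s| ^ (-β)) s)
        volume (c-1) (c+1) :=
      (_root_.intervalIntegrable_const (c := (1:ℝ))).add hInd.intervalIntegrable
    have hmono := intervalIntegral.integral_mono_on (by linarith : c - 1 ≤ c + 1)
      (L0 hr (c-1) (c+1)) hg (fun x _ => hpoint x)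
    have hsplit : (∫ s in (c-1)..(c+1),
        (1 + (Ioc (-1:ℝ) 1).indicator (fun s : ℝ => |s| ^ (-β)) s))
        = 2 + ∫ s in (c-1)..(c+1), (Ioc (-1:ℝ) 1).indicator (fun s : ℝ => |s| ^ (-β)) s := by
      rw [intervalIntegral.integral_add (_root_.intervalIntegrable_const (c := (1:ℝ)))
        hInd.intervalIntegrable, intervalIntegral.integral_const]
      norm_num
    have hle : (∫ s in (c-1)..(c+1), (Ioc (-1:ℝ) 1).indicator (fun s : ℝ => |s| ^ (-β)) s)
        ≤ 2 / (1 - β) := by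
      rw [intervalIntegral.integral_of_le (by linarith : c - 1 ≤ c + 1)]
      have h1 : (∫ s in Ioc (c-1) (c+1), (Ioc (-1:ℝ) 1).indicator (fun s : ℝ => |s| ^ (-β)) s)
          ≤ ∫ s, (Ioc (-1:ℝ) 1).indicator (fun s : ℝ => |s| ^ (-β)) s :=
        setIntegral_le_integral hInd (Filter.Eventually.of_forall hIndnn)
      have h2 : (∫ s, (Ioc (-1:ℝ) 1).indicator (fun s : ℝ => |s| ^ (-β)) s) = 2 / (1 - β) := by
        rw [MeasureTheory.integral_indicator measurableSet_Ioc,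
          ← intervalIntegral.integral_of_le (by norm_num : (-1:ℝ) ≤ 1), L1 hβ0 hβ1]
      linarith
    linarith
  exact ⟨hii.1, by rw [hval]; linarith⟩

lemma Lkey {α ε : ℝ} (hα : 0 < α) (hε : 0 < ε) (hαε : α + ε < 1) (x₁ x₂ t₁ t₂ : ℝ) :
    1 / (|x₁ ^ 2 - t₁ ^ 2| ^ (α / 2) * |x₁ - t₁| ^ ε * |x₂ - t₂| ^ (1 - ε)) ≤
    ((|(-x₁) - t₁| ^ (-α) + |x₁ - t₁| ^ (-(α + 2 * ε))) / 2) * |x₂ - t₂| ^ (-(1 - ε)) := by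
  have hu : (0:ℝ) ≤ |x₁ - t₁| := abs_nonneg _
  have hv : (0:ℝ) ≤ |x₁ + t₁| := abs_nonneg _
  have hw : (0:ℝ) ≤ |x₂ - t₂| := abs_nonneg _
  have habs : |x₁ ^ 2 - t₁ ^ 2| = |x₁ - t₁| * |x₁ + t₁| := by
    rw [show x₁ ^ 2 - t₁ ^ 2 = (x₁ - t₁) * (x₁ + t₁) by ring, abs_mul]
  have hvn : |(-x₁) - t₁| = |x₁ + t₁| := by
    rw [show -x₁ - t₁ = -(x₁ + t₁) by ring, abs_neg]
  rw [habs, hvn]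
  have lhs_eq :
      1 / ((|x₁ - t₁| * |x₁ + t₁|) ^ (α / 2) * |x₁ - t₁| ^ ε * |x₂ - t₂| ^ (1 - ε)) =
      (|x₁ + t₁| ^ (-(α / 2)) * |x₁ - t₁| ^ (-(α / 2 + ε))) * |x₂ - t₂| ^ (-(1 - ε)) := by
    rw [Real.mul_rpow hu hv,
        show -(α / 2 + ε) = -(α / 2) + (-ε) by ring,
        Real.rpow_add' hu (by intro h; linarith),
        Real.rpow_neg hu, Real.rpow_neg hv, Real.rpow_neg hu, Real.rpow_neg hw, one_div]
    rw [mul_inv, mul_inv]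
    ring
  rw [lhs_eq]
  have hA2 : |x₁ + t₁| ^ (-(α / 2)) * |x₁ + t₁| ^ (-(α / 2)) = |x₁ + t₁| ^ (-α) := by
    rw [← Real.rpow_add' hv (by intro h; linarith)]
    congr 1; ring
  have hB2 : |x₁ - t₁| ^ (-(α / 2 + ε)) * |x₁ - t₁| ^ (-(α / 2 + ε))
      = |x₁ - t₁| ^ (-(α + 2 * ε)) := by
    rw [← Real.rpow_add' hu (by intro h; linarith)]
    congr 1; ring
  have am : |x₁ + t₁| ^ (-(α / 2)) * |x₁ - t₁| ^ (-(α / 2 + ε)) ≤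
      (|x₁ + t₁| ^ (-α) + |x₁ - t₁| ^ (-(α + 2 * ε))) / 2 := by
    rw [← hA2, ← hB2]
    nlinarith [sq_nonneg (|x₁ + t₁| ^ (-(α / 2)) - |x₁ - t₁| ^ (-(α / 2 + ε)))]
  exact mul_le_mul_of_nonneg_right am (Real.rpow_nonneg hw _)


theorem stmt_6 (α : ℝ) (hα : 0 < α) (hα1 : α < 1) :
    ∃ ε : ℝ, 0 < ε ∧ α + 2 * ε < 1 ∧
      ∃ C : ℝ, ∀ x : ℝ × ℝ,
        IntegrableOn
          (fun t : ℝ × ℝ =>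
            1 / (|x.1 ^ 2 - t.1 ^ 2| ^ (α / 2) * |x.1 - t.1| ^ ε *
              |x.2 - t.2| ^ (1 - ε)))
          {t : ℝ × ℝ | t.1 ^ 2 + t.2 ^ 2 < 1} volume ∧
        (∫ t in {t : ℝ × ℝ | t.1 ^ 2 + t.2 ^ 2 < 1},
            1 / (|x.1 ^ 2 - t.1 ^ 2| ^ (α / 2) * |x.1 - t.1| ^ ε *
              |x.2 - t.2| ^ (1 - ε))) ≤ C := by
  refine ⟨(1 - α) / 4, by linarith, by linarith, ?_⟩
  set ε : ℝ := (1 - α) / 4 with hεdef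
  have hε : 0 < ε := by rw [hεdef]; linarith
  have hβ₂0 : 0 < α + 2 * ε := by linarith
  have hβ₂1 : α + 2 * ε < 1 := by rw [hεdef]; linarith
  have hβ₃0 : 0 < 1 - ε := by rw [hεdef]; linarith
  have hβ₃1 : 1 - ε < 1 := by linarith
  set C₁ : ℝ := ((2 + 2 / (1 - α)) + (2 + 2 / (1 - (α + 2 * ε)))) / 2 with hC₁
  set C₂ : ℝ := 2 + 2 / (1 - (1 - ε)) with hC₂
  refine ⟨C₁ * C₂, ?_⟩
  intro x
  obtain ⟨hAint, hAval⟩ := L2 hα hα1 (-x.1)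
  obtain ⟨hBint, hBval⟩ := L2 hβ₂0 hβ₂1 x.1
  obtain ⟨hCint, hCval⟩ := L2 hβ₃0 hβ₃1 x.2
  set f : ℝ × ℝ → ℝ := fun t : ℝ × ℝ =>
    1 / (|x.1 ^ 2 - t.1 ^ 2| ^ (α / 2) * |x.1 - t.1| ^ ε * |x.2 - t.2| ^ (1 - ε)) with hf
  set g₁ : ℝ → ℝ := fun t => (|(-x.1) - t| ^ (-α) + |x.1 - t| ^ (-(α + 2 * ε))) / 2 with hg₁
  set g₂ : ℝ → ℝ := fun t => |x.2 - t| ^ (-(1 - ε)) with hg₂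
  set S : Set (ℝ × ℝ) := {t : ℝ × ℝ | t.1 ^ 2 + t.2 ^ 2 < 1} with hS
  set Q : Set (ℝ × ℝ) := Set.Ioc (-1:ℝ) 1 ×ˢ Set.Ioc (-1:ℝ) 1 with hQ
  have hSQ : S ⊆ Q := by
    intro t ht
    have h : t.1 ^ 2 + t.2 ^ 2 < 1 := ht
    constructor
    · constructor <;> nlinarith [sq_nonneg t.2, sq_nonneg (t.1 + 1), sq_nonneg (t.1 - 1)]
    · constructor <;> nlinarith [sq_nonneg t.1, sq_nonneg (t.2 + 1), sq_nonneg (t.2 - 1)]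
  have hg₁int : IntegrableOn g₁ (Set.Ioc (-1:ℝ) 1) volume := (hAint.add hBint).div_const 2
  have hg₁nn : ∀ s : ℝ, 0 ≤ g₁ s := by
    intro s
    have := Real.rpow_nonneg (abs_nonneg (-x.1 - s)) (-α)
    have := Real.rpow_nonneg (abs_nonneg (x.1 - s)) (-(α + 2 * ε))
    rw [hg₁]
    positivity
  have hg₂nn : ∀ s : ℝ, 0 ≤ g₂ s := fun s => Real.rpow_nonneg (abs_nonneg _) _
  have hg₁val : (∫ t in Set.Ioc (-1:ℝ) 1, g₁ t) ≤ C₁ := by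
    have heq : (∫ t in Set.Ioc (-1:ℝ) 1, g₁ t) =
        ((∫ t in Set.Ioc (-1:ℝ) 1, |(-x.1) - t| ^ (-α)) +
          ∫ t in Set.Ioc (-1:ℝ) 1, |x.1 - t| ^ (-(α + 2 * ε))) / 2 := by
      simp only [hg₁]
      rw [MeasureTheory.integral_div, integral_add hAint hBint]
    rw [heq, hC₁]
    have h2 := hAval
    have h3 := hBval
    linarith
  have hboundint : IntegrableOn (fun t : ℝ × ℝ => g₁ t.1 * g₂ t.2) Q volume := by
    rw [hQ, IntegrableOn, Measure.volume_eq_prod, ← Measure.prod_restrict]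
    exact hg₁int.mul_prod hCint
  have hKey : ∀ t : ℝ × ℝ, f t ≤ g₁ t.1 * g₂ t.2 := by
    intro t
    exact Lkey hα hε (by rw [hεdef]; linarith) x.1 x.2 t.1 t.2
  have hfnn : ∀ t : ℝ × ℝ, 0 ≤ f t := by
    intro t
    rw [hf]
    positivity
  have hfmeas : Measurable f := by
    rw [hf]
    have m1 : Continuous fun t : ℝ × ℝ => |x.1 ^ 2 - t.1 ^ 2| ^ (α / 2) :=
      ((continuous_const.sub (continuous_fst.pow 2)).abs).rpow_const
        (fun _ => Or.inr (by linarith))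
    have m2 : Continuous fun t : ℝ × ℝ => |x.1 - t.1| ^ ε :=
      ((continuous_const.sub continuous_fst).abs).rpow_const (fun _ => Or.inr hε.le)
    have m3 : Continuous fun t : ℝ × ℝ => |x.2 - t.2| ^ (1 - ε) :=
      ((continuous_const.sub continuous_snd).abs).rpow_const (fun _ => Or.inr hβ₃0.le)
    exact measurable_const.div ((m1.mul m2).mul m3).measurable
  have hfint : IntegrableOn f S volume := by
    refine Integrable.mono' (hboundint.mono_set hSQ) hfmeas.aestronglyMeasurable ?_
    filter_upwards with t
    rw [Real.norm_eq_abs, abs_of_nonneg (hfnn t)]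
    exact hKey t
  refine ⟨hfint, ?_⟩
  calc (∫ t in S, f t) ≤ ∫ t in S, g₁ t.1 * g₂ t.2 :=
        integral_mono hfint (hboundint.mono_set hSQ) hKey
    _ ≤ ∫ t in Q, g₁ t.1 * g₂ t.2 :=
        setIntegral_mono_set hboundint
          (Filter.Eventually.of_forall fun t => mul_nonneg (hg₁nn t.1) (hg₂nn t.2))
          (HasSubset.Subset.eventuallyLE hSQ)
    _ = (∫ t in Set.Ioc (-1:ℝ) 1, g₁ t) * ∫ t in Set.Ioc (-1:ℝ) 1, g₂ t := by
        rw [hQ, Measure.volume_eq_prod]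
        exact setIntegral_prod_mul g₁ g₂ _ _
    _ ≤ C₁ * C₂ := by
        have h0 : 0 ≤ ∫ t in Set.Ioc (-1:ℝ) 1, g₂ t :=
          integral_nonneg fun t => hg₂nn t
        have h1 : 0 ≤ C₁ := le_trans (integral_nonneg fun t => hg₁nn t) hg₁val
        exact mul_le_mul hg₁val hCval h0 h1
end

section
/- Let ρ : ℝⁿ → ℝ be C², and suppose at a boundary point ζ (with ρ(ζ)=0) the Hessian of ρ is positive definite with smallest eigenvalue ≥ c > 0. Then for every z with ρ(z) ≤ 0, writing L(z) = Σⱼ ∂ρ/∂tⱼ(ζ)(zⱼ − ζⱼ) for the linear part, there exist C' > 0 and δ > 0 (depending on ρ, c) such that |L(z)| ≥ C'|z − ζ|² whenever |z − ζ| < δ and L(z) ≤ 0. -/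
/-! Continuity of the second derivative keeps the Hessian of `ρ` above `c / 2` on a ball around
`ζ`. Restricting `ρ` to the segment from `ζ` to `z` and integrating twice gives the Taylor lower
bound `ρ ζ + Dρ(ζ)(z - ζ) + (c / 4) ‖z - ζ‖² ≤ ρ z`; since `ρ ζ = 0 ≥ ρ z`, this forces
`Dρ(ζ)(z - ζ) ≤ -(c / 4) ‖z - ζ‖²`. -/

open Set Topology

lemma monotoneOn_Icc_of_hasDerivAt_nonneg {g g' : ℝ → ℝ} {a b : ℝ}
    (hg : ∀ t, HasDerivAt g (g' t) t) (hg' : ∀ t ∈ Ioo a b, 0 ≤ g' t) :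
    MonotoneOn g (Icc a b) :=
  monotoneOn_of_hasDerivWithinAt_nonneg (convex_Icc a b)
    (continuous_iff_continuousAt.2 fun t => (hg t).continuousAt).continuousOn
    (fun t _ => (hg t).hasDerivWithinAt) (by simpa only [interior_Icc] using hg')

lemma add_add_half_le_of_le_deriv_deriv {f f' f'' : ℝ → ℝ} {K : ℝ}
    (hf : ∀ t, HasDerivAt f (f' t) t) (hf' : ∀ t, HasDerivAt f' (f'' t) t)
    (hK : ∀ t ∈ Ioo (0 : ℝ) 1, K ≤ f'' t) :
    f 0 + f' 0 + K / 2 ≤ f 1 := by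
  have hf'_ge : ∀ t ∈ Icc (0 : ℝ) 1, f' 0 + K * t ≤ f' t := by
    have hmono : MonotoneOn (fun t => f' t - K * t) (Icc 0 1) :=
      monotoneOn_Icc_of_hasDerivAt_nonneg
        (fun t => (hf' t).sub (by simpa using (hasDerivAt_id t).const_mul K))
        (fun t ht => sub_nonneg.2 (hK t ht))
    intro t ht
    have := hmono (left_mem_Icc.2 zero_le_one) ht ht.1
    simp only [mul_zero, sub_zero] at this
    linarith
  have hmono : MonotoneOn (fun t => f t - f' 0 * t - K / 2 * t ^ 2) (Icc 0 1) := by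
    refine monotoneOn_Icc_of_hasDerivAt_nonneg (g' := fun t => f' t - f' 0 - K * t)
      (fun t => ?_) (fun t ht => ?_)
    · exact (((hf t).fun_sub ((hasDerivAt_id' t).const_mul (f' 0))).fun_sub
        ((hasDerivAt_pow 2 t).const_mul (K / 2))).congr_deriv (by norm_num; ring)
    · linarith [hf'_ge t (Ioo_subset_Icc_self ht)]
  have := hmono (left_mem_Icc.2 zero_le_one) (right_mem_Icc.2 zero_le_one) zero_le_one
  simp only [mul_zero, sub_zero, zero_pow two_ne_zero, mul_one, one_pow] at this
  linarith

lemma ContDiff.add_fderiv_add_le {E : Type*} [NormedAddCommGroup E] [NormedSpace ℝ E]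
    {ρ : E → ℝ} (hρ : ContDiff ℝ 2 ρ) {x y : E} {K : ℝ}
    (hK : ∀ t ∈ Ioo (0 : ℝ) 1,
      K ≤ fderiv ℝ (fderiv ℝ ρ) (x + t • (y - x)) (y - x) (y - x)) :
    ρ x + fderiv ℝ ρ x (y - x) + K / 2 ≤ ρ y := by
  have hline : ∀ t : ℝ, HasDerivAt (fun s : ℝ => x + s • (y - x)) (y - x) t := fun t => by
    simpa using ((hasDerivAt_id t).smul_const (y - x)).const_add x
  have hρ' : ContDiff ℝ 1 (fderiv ℝ ρ) := hρ.fderiv_right (by norm_num)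
  have := add_add_half_le_of_le_deriv_deriv (f := fun t => ρ (x + t • (y - x))) (K := K)
    (fun t => ((hρ.differentiable two_ne_zero _).hasFDerivAt).comp_hasDerivAt t (hline t))
    (fun t => by
      simpa using (((hρ'.differentiable one_ne_zero _).hasFDerivAt).comp_hasDerivAt t
        (hline t)).clm_apply (hasDerivAt_const t (y - x)))
    hK
  simpa using this

lemma eventually_forall_le_apply_apply_of_continuousAt {E : Type*} [NormedAddCommGroup E]
    [NormedSpace ℝ E] {B : E → E →L[ℝ] E →L[ℝ] ℝ} {x₀ : E} (hB : ContinuousAt B x₀)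
    {c c' : ℝ} (hc : c' < c) (hx₀ : ∀ v, c * ‖v‖ ^ 2 ≤ B x₀ v v) :
    ∀ᶠ x in 𝓝 x₀, ∀ v, c' * ‖v‖ ^ 2 ≤ B x v v := by
  filter_upwards [hB (Metric.ball_mem_nhds (B x₀) (sub_pos.2 hc))] with x hx v
  replace hx : ‖B x - B x₀‖ < c - c' := (dist_eq_norm (B x) (B x₀)).symm.trans_lt hx
  have hdiff : |B x v v - B x₀ v v| ≤ (c - c') * ‖v‖ ^ 2 := by
    calc |B x v v - B x₀ v v| = ‖(B x - B x₀) v v‖ := by simp [Real.norm_eq_abs]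
      _ ≤ ‖B x - B x₀‖ * ‖v‖ * ‖v‖ := (B x - B x₀).le_opNorm₂ v v
      _ ≤ (c - c') * ‖v‖ ^ 2 := by rw [mul_assoc, ← sq]; gcongr
  linarith [(abs_le.1 hdiff).1, hx₀ v]

theorem stmt_14 (n : ℕ) (ρ : EuclideanSpace ℝ (Fin n) → ℝ)
    (hρ : ContDiff ℝ 2 ρ)
    (ζ : EuclideanSpace ℝ (Fin n)) (hζ : ρ ζ = 0)
    (c : ℝ) (hc : 0 < c)
    (hHess : ∀ v : EuclideanSpace ℝ (Fin n),
      c * ‖v‖ ^ 2 ≤ iteratedFDeriv ℝ 2 ρ ζ ![v, v]) :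
    ∃ C' : ℝ, 0 < C' ∧ ∃ δ : ℝ, 0 < δ ∧
      ∀ z : EuclideanSpace ℝ (Fin n), ρ z ≤ 0 → ‖z - ζ‖ < δ →
        fderiv ℝ ρ ζ (z - ζ) ≤ 0 →
        C' * ‖z - ζ‖ ^ 2 ≤ |fderiv ℝ ρ ζ (z - ζ)| := by
  have hB : Continuous (fderiv ℝ (fderiv ℝ ρ)) :=
    (hρ.fderiv_right (m := 1) le_rfl).continuous_fderiv one_ne_zero
  have hBζ : ∀ v, c * ‖v‖ ^ 2 ≤ fderiv ℝ (fderiv ℝ ρ) ζ v v := fun v => by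
    simpa only [iteratedFDeriv_two_apply, Matrix.cons_val_zero, Matrix.cons_val_one] using hHess v
  obtain ⟨δ, hδ, hball⟩ := Metric.eventually_nhds_iff_ball.1
    (eventually_forall_le_apply_apply_of_continuousAt hB.continuousAt (half_lt_self hc) hBζ)
  refine ⟨c / 4, by positivity, δ, hδ, fun z hz hzδ hL => ?_⟩
  have htaylor := hρ.add_fderiv_add_le (x := ζ) (y := z) (K := c / 2 * ‖z - ζ‖ ^ 2)
    fun t ht => hball _ ((convex_ball ζ δ).add_smul_sub_mem (Metric.mem_ball_self hδ)
      (mem_ball_iff_norm.2 hzδ) ⟨ht.1.le, ht.2.le⟩) _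
  rw [abs_of_nonpos hL]
  linarith
end

section
/- Let φ(t) = exp(−1/t^{α/2}) for t > 0 with 0 < α. Then |ln φ(t)| = t^{−α/2} for t > 0, and consequently for 0 < α < 1 and any z₁ ∈ ℂ, the planar integral over {|ζ₁| < δ} of |ln φ(| |z₁|² − |ζ₁|² |)| / |z₁ − ζ₁| dA(ζ₁) equals the integral of 1/( | |z₁|² − |ζ₁|² |^{α/2} |z₁ − ζ₁| ) dA(ζ₁) and is finite. -/
/-!
Since `log φ(t) = -t^(-α/2)`, the two integrands agree; on the circle `‖ζ‖ = ‖z‖` both vanish,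
by the conventions `φ 0 = 0` and `log 0 = 0`. For integrability, Young's inequality
`ab ≤ a^p/p + b^q/q` separates the circle singularity `|‖z‖² - ‖ζ‖²|^(-αp/2)` from the point
singularity `‖z - ζ‖^(-q)`, and for `α < 1` the exponents can be chosen with `αp/2 < 1` and
`q < 2`. The point singularity is then integrable because `q` is below the dimension, and the
circle singularity reduces, in polar coordinates and after substituting `u = r²`, to the
one-dimensional singularity `|u - a|^(-αp/2)`.
-/

open MeasureTheory Set Metric Module

lemma Integrable.mul_of_integrable_rpow {α : Type*} [MeasurableSpace α] {μ : Measure α}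
    {f g : α → ℝ} {p q : ℝ} (hpq : p.HolderConjugate q) (hf0 : 0 ≤ f) (hg0 : 0 ≤ g)
    (hf : AEStronglyMeasurable f μ) (hg : AEStronglyMeasurable g μ)
    (hfp : Integrable (fun x => f x ^ p) μ) (hgq : Integrable (fun x => g x ^ q) μ) :
    Integrable (fun x => f x * g x) μ := by
  refine ((hfp.div_const p).add (hgq.div_const q)).mono' (hf.mul hg) (.of_forall fun x => ?_)
  rw [Real.norm_eq_abs, abs_of_nonneg (mul_nonneg (hf0 x) (hg0 x))]
  exact Real.young_inequality_of_nonneg (hf0 x) (hg0 x) hpq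

section SingularIntegrals

variable {E : Type*} [NormedAddCommGroup E] [NormedSpace ℝ E] [FiniteDimensional ℝ E]
  [MeasurableSpace E] [BorelSpace E] (μ : Measure E) [μ.IsAddHaarMeasure]

lemma integrableOn_ball_norm_sub_rpow_neg (hd : 1 ≤ finrank ℝ E) {q : ℝ}
    (hq : q < finrank ℝ E) (z c : E) (r : ℝ) :
    IntegrableOn (fun x => ‖z - x‖ ^ (-q)) (ball c r) μ := by
  set R := r + dist c z
  have hball : IntegrableOn (fun x : E => ‖x‖ ^ (-q)) (ball 0 R) μ :=
    integrableOn_ball_of_norm_le_rpow (C := 1) hd hq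
      (.of_forall fun x => by rw [one_mul, Real.norm_eq_abs, abs_of_nonneg (by positivity)])
      (continuous_norm.measurable.pow_const _).aestronglyMeasurable
  have htrans := ((hball.integrable_indicator measurableSet_ball).comp_sub_right z).integrableOn
    (s := ball c r)
  refine htrans.congr_fun (fun x hx => ?_) measurableSet_ball
  have hxz : x - z ∈ ball (0 : E) R := by
    rw [mem_ball_zero_iff, ← dist_eq_norm]
    exact (dist_triangle x c z).trans_lt (add_lt_add_left (mem_ball.mp hx) _)
  simp only [indicator_of_mem hxz, norm_sub_rev]

lemma integrableOn_Ioo_mul_abs_sub_sq_rpow_neg {β : ℝ} (hβ : β < 1) (a r : ℝ) :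
    IntegrableOn (fun y : ℝ => y * |a - y ^ 2| ^ (-β)) (Ioo 0 r) := by
  have hsq : IntegrableOn (fun u : ℝ => |a - u| ^ (-β)) ((fun y : ℝ => y ^ 2) '' Ioo 0 r) := by
    refine (integrableOn_ball_norm_sub_rpow_neg volume (by simp) (by simpa using hβ) a 0
      (r ^ 2)).mono_set ?_
    rintro _ ⟨y, ⟨hy0, hyr⟩, rfl⟩
    rw [mem_ball_zero_iff, Real.norm_eq_abs, abs_of_pos (by positivity)]
    exact pow_lt_pow_left₀ hyr hy0.le two_ne_zero
  rw [integrableOn_image_iff_integrableOn_abs_deriv_smul measurableSet_Ioo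
    (fun y _ => (hasDerivAt_pow 2 y).hasDerivWithinAt)
    ((pow_left_strictMonoOn₀ two_ne_zero).injOn.mono fun y hy => le_of_lt hy.1)] at hsq
  refine IntegrableOn.congr_fun (hsq.const_mul (1 / 2)) (fun y hy => ?_) measurableSet_Ioo
  norm_num [abs_of_pos hy.1]
  ring

lemma integrableOn_ball_abs_sub_norm_sq_rpow_neg (hd : 2 ≤ finrank ℝ E) {β : ℝ} (hβ : β < 1)
    (a r : ℝ) : IntegrableOn (fun x : E => |a - ‖x‖ ^ 2| ^ (-β)) (ball 0 r) μ := by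
  have : Nontrivial E := Module.nontrivial_of_finrank_pos (R := ℝ) (by omega)
  rw [integrableOn_fun_norm_addHaar μ (f := fun y => |a - y ^ 2| ^ (-β))]
  refine ((integrableOn_Ioo_mul_abs_sub_sq_rpow_neg hβ a r).const_mul
    (r ^ (finrank ℝ E - 2))).mono' (by fun_prop) ?_
  filter_upwards [ae_restrict_mem measurableSet_Ioo] with y ⟨hy0, hyr⟩
  have hpow : y ^ (finrank ℝ E - 1) = y ^ (finrank ℝ E - 2) * y := by
    rw [← pow_succ]; congr 1; omega
  rw [smul_eq_mul, hpow, Real.norm_eq_abs, abs_of_nonneg (by positivity), mul_assoc]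
  gcongr

lemma integrableOn_ball_one_div_abs_sq_sub_rpow_mul_norm_sub (hd : 2 ≤ finrank ℝ E) {s : ℝ}
    (hs0 : 0 ≤ s) (hs : s < 1 / 2) (z : E) (r : ℝ) :
    IntegrableOn (fun x => 1 / (|‖z‖ ^ 2 - ‖x‖ ^ 2| ^ s * ‖z - x‖)) (ball 0 r) μ := by
  -- Young's inequality with 1/p the midpoint of s and 1/2: then s p < 1 and q < 2.
  set p := 4 / (2 * s + 1)
  set q := 4 / (3 - 2 * s)
  have hpq : p.HolderConjugate q := by
    rw [Real.holderConjugate_iff, lt_div_iff₀ (by linarith), inv_div, inv_div]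
    constructor
    · linarith
    · field_simp; ring
  have hsp : s * p < 1 := by
    rw [mul_div_assoc', div_lt_one (by linarith)]; linarith
  have hq : q < finrank ℝ E := by
    have : (2 : ℝ) ≤ finrank ℝ E := by exact_mod_cast hd
    rw [div_lt_iff₀ (by linarith)]; nlinarith
  have key := Integrable.mul_of_integrable_rpow (μ := μ.restrict (ball 0 r)) hpq
    (f := fun x => |‖z‖ ^ 2 - ‖x‖ ^ 2| ^ (-s)) (g := fun x => ‖z - x‖ ^ (-1 : ℝ))
    (fun x => by positivity) (fun x => by positivity)
    (by fun_prop : Measurable _).aestronglyMeasurable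
    (by fun_prop : Measurable _).aestronglyMeasurable
    ?_ ?_
  · refine IntegrableOn.congr_fun key (fun x _ => ?_) measurableSet_ball
    rw [Real.rpow_neg (abs_nonneg _), Real.rpow_neg_one, one_div, mul_inv]
  · refine IntegrableOn.congr_fun
      (integrableOn_ball_abs_sub_norm_sq_rpow_neg μ hd hsp (‖z‖ ^ 2) r) (fun x _ => ?_)
      measurableSet_ball
    rw [← Real.rpow_mul (abs_nonneg _), neg_mul]
  · refine IntegrableOn.congr_fun
      (integrableOn_ball_norm_sub_rpow_neg μ (by omega) hq z 0 r) (fun x _ => ?_)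
      measurableSet_ball
    rw [← Real.rpow_mul (norm_nonneg _), neg_one_mul]

end SingularIntegrals

theorem stmt_17_general (α δ : ℝ) (hα : 0 < α) (hα1 : α < 1)
    (φ : ℝ → ℝ)
    (hφ : ∀ t : ℝ, 0 < t → φ t = Real.exp (-(1 / t ^ (α / 2))))
    (hφ0 : φ 0 = 0) :
    (∀ t : ℝ, 0 < t → |Real.log (φ t)| = t ^ (-(α / 2))) ∧
    ∀ z₁ : ℂ,
      (∫ ζ₁ in Metric.ball (0:ℂ) δ,
          |Real.log (φ (|‖z₁‖ ^ 2 - ‖ζ₁‖ ^ 2|))| /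
            ‖z₁ - ζ₁‖) =
        (∫ ζ₁ in Metric.ball (0:ℂ) δ,
          1 / (|‖z₁‖ ^ 2 - ‖ζ₁‖ ^ 2| ^ (α / 2) *
            ‖z₁ - ζ₁‖)) ∧
      IntegrableOn
        (fun ζ₁ : ℂ =>
          |Real.log (φ (|‖z₁‖ ^ 2 - ‖ζ₁‖ ^ 2|))| /
            ‖z₁ - ζ₁‖)
        (Metric.ball (0:ℂ) δ) volume := by
  have hlog : ∀ t : ℝ, 0 < t → |Real.log (φ t)| = t ^ (-(α / 2)) := fun t ht => by
    rw [hφ t ht, Real.log_exp, abs_neg, abs_of_nonneg (by positivity), one_div,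
      Real.rpow_neg ht.le]
  refine ⟨hlog, fun z₁ => ?_⟩
  have hintegrand : (fun ζ₁ : ℂ => |Real.log (φ (|‖z₁‖ ^ 2 - ‖ζ₁‖ ^ 2|))| / ‖z₁ - ζ₁‖) =
      fun ζ₁ => 1 / (|‖z₁‖ ^ 2 - ‖ζ₁‖ ^ 2| ^ (α / 2) * ‖z₁ - ζ₁‖) := by
    funext ζ₁
    rcases (abs_nonneg (‖z₁‖ ^ 2 - ‖ζ₁‖ ^ 2)).eq_or_lt with h | h
    · rw [← h, hφ0, Real.log_zero, abs_zero, zero_div, Real.zero_rpow (by positivity), zero_mul,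
        div_zero]
    · rw [hlog _ h, Real.rpow_neg h.le, one_div, mul_inv, div_eq_mul_inv]
  rw [hintegrand]
  exact ⟨rfl, integrableOn_ball_one_div_abs_sq_sub_rpow_mul_norm_sub volume
    Complex.finrank_real_complex.ge (by positivity) (by linarith) z₁ δ⟩

theorem stmt_17 (α δ : ℝ) (hα : 0 < α) (hα1 : α < 1) (hδ : 0 < δ)
    (φ : ℝ → ℝ)
    (hφ : ∀ t : ℝ, 0 < t → φ t = Real.exp (-(1 / t ^ (α / 2))))
    (hφ0 : φ 0 = 0) :
    (∀ t : ℝ, 0 < t → |Real.log (φ t)| = t ^ (-(α / 2))) ∧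
    ∀ z₁ : ℂ,
      (∫ ζ₁ in Metric.ball (0:ℂ) δ,
          |Real.log (φ (|‖z₁‖ ^ 2 - ‖ζ₁‖ ^ 2|))| /
            ‖z₁ - ζ₁‖) =
        (∫ ζ₁ in Metric.ball (0:ℂ) δ,
          1 / (|‖z₁‖ ^ 2 - ‖ζ₁‖ ^ 2| ^ (α / 2) *
            ‖z₁ - ζ₁‖)) ∧
      IntegrableOn
        (fun ζ₁ : ℂ =>
          |Real.log (φ (|‖z₁‖ ^ 2 - ‖ζ₁‖ ^ 2|))| /
            ‖z₁ - ζ₁‖)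
        (Metric.ball (0:ℂ) δ) volume :=
  stmt_17_general α δ hα hα1 φ hφ hφ0
end
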